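/- arXiv:2407.06589 — 7 statements merged into one kernel-verified Lean document; each statement's English description precedes it below -/
import Mathlib

section
/- If $(A, \cdot, R)$ is an associative algebra with a Rota--Baxter operator $R$ of weight 0, then the operations $a \prec b := a \cdot R(b)$ and $a \succ b := R(a) \cdot b$ make $A$ into a dendriform algebra, i.e. they satisfy $(a_1\prec a_2)\prec a_3 = a_1\prec(a_2\prec a_3 + a_2\succ a_3)$, $(a_1\succ a_2)\prec a_3 = a_1\succ(a_2\prec a_3)$, and $(a_1\prec a_2 + a_1\succ a_2)\succ a_3 = a_1\succ(a_2\succ a_3)$. -/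
section RotaBaxter

variable {A : Type*} [NonUnitalSemiring A] {R : A → A}

theorem mul_apply_mul_apply_of_rotaBaxter (hR : ∀ a b : A, R a * R b = R (R a * b + a * R b))
    (a₁ a₂ a₃ : A) : a₁ * R a₂ * R a₃ = a₁ * R (a₂ * R a₃ + R a₂ * a₃) := by
  rw [mul_assoc, hR, add_comm]

theorem apply_mul_apply_mul_of_rotaBaxter (hR : ∀ a b : A, R a * R b = R (R a * b + a * R b))
    (a₁ a₂ a₃ : A) : R (a₁ * R a₂ + R a₁ * a₂) * a₃ = R a₁ * (R a₂ * a₃) := by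
  rw [add_comm, ← hR, mul_assoc]

end RotaBaxter

theorem dendriform_of_rotaBaxter_general
    (k : Type*) (A : Type*) [Field k] [Ring A] [Algebra k A]
    (R : A →ₗ[k] A)
    (hR : ∀ a b : A, R a * R b = R (R a * b + a * R b)) :
    (∀ a₁ a₂ a₃ : A, (a₁ * R a₂) * R a₃ = a₁ * R (a₂ * R a₃ + R a₂ * a₃)) ∧
    (∀ a₁ a₂ a₃ : A, (R a₁ * a₂) * R a₃ = R a₁ * (a₂ * R a₃)) ∧
    (∀ a₁ a₂ a₃ : A, R (a₁ * R a₂ + R a₁ * a₂) * a₃ = R a₁ * (R a₂ * a₃)) :=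
  ⟨mul_apply_mul_apply_of_rotaBaxter hR, fun _ _ _ => mul_assoc _ _ _,
    apply_mul_apply_mul_of_rotaBaxter hR⟩

/-- A Rota–Baxter operator of weight 0 on an associative algebra
induces a dendriform algebra structure via `a ≺ b = a·R(b)`, `a ≻ b = R(a)·b`. -/
theorem dendriform_of_rotaBaxter
    (k : Type*) (A : Type*) [Field k] [CharZero k] [Ring A] [Algebra k A]
    (R : A →ₗ[k] A)
    (hR : ∀ a b : A, R a * R b = R (R a * b + a * R b)) :
    (∀ a₁ a₂ a₃ : A, (a₁ * R a₂) * R a₃ = a₁ * R (a₂ * R a₃ + R a₂ * a₃)) ∧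
    (∀ a₁ a₂ a₃ : A, (R a₁ * a₂) * R a₃ = R a₁ * (a₂ * R a₃)) ∧
    (∀ a₁ a₂ a₃ : A, R (a₁ * R a₂ + R a₁ * a₂) * a₃ = R a₁ * (R a₂ * a₃)) :=
  dendriform_of_rotaBaxter_general k A R hR
end

section
/- Let $L = \bigoplus_{n>0} L_n$ be a Lie algebra over a field of characteristic zero with a strictly positive integer grading ($[L_m, L_n] \subseteq L_{m+n}$). Then the bilinear operation defined on homogeneous elements by $x \triangleleft y := \frac{|x|}{|x|+|y|}[x,y]$ satisfies the (right) pre-Lie identity $(x\triangleleft y)\triangleleft z - x\triangleleft(y\triangleleft z) = (x\triangleleft z)\triangleleft y - x\triangleleft(z\triangleleft y)$. -/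
/-!
Both associators reduce to multiples of the same scalar `|x| / (|x|+|y|+|z|)`: in
`(x ◁ y) ◁ z` the factor `|x|+|y|` cancels, and `x ◁ (y ◁ z)` carries the extra factor
`|y| / (|y|+|z|)`. After the Jacobi identity what remains is a combination of double brackets
whose coefficients `|y|/(|y|+|z|)` and `|z|/(|y|+|z|)` sum to one, and that combination is
symmetric in `y` and `z`.
-/

/-- The Foissy operation `x ◁ y = |x|/(|x|+|y|) [x,y]` on homogeneous elements of a
positively graded Lie algebra, written with explicit degrees. -/
noncomputable def foissyOp (k : Type*) {G : Type*} [Field k] [LieRing G] [LieAlgebra k G]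
    (m n : ℕ) (x y : G) : G :=
  (((m : k) / ((m : k) + (n : k)))) • ⁅x, y⁆

theorem smul_lie_lie_sub_lie_lie_comm_of_add_eq_one {R L : Type*} [CommRing R] [LieRing L]
    [LieAlgebra R L] {t u : R} (htu : t + u = 1) (x y z : L) :
    t • ⁅x, ⁅y, z⁆⁆ - ⁅y, ⁅x, z⁆⁆ = u • ⁅x, ⁅z, y⁆⁆ - ⁅z, ⁅x, y⁆⁆ := by
  obtain rfl : u = 1 - t := eq_sub_of_add_eq' htu
  rw [← lie_skew z y, lie_neg, ← lie_skew z ⁅x, y⁆, leibniz_lie x y z]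
  module

section

variable {k G : Type*} [Field k] [LieRing G] [LieAlgebra k G]

theorem foissyOp_foissyOp_left (a b c : ℕ) (x y z : G) (hab : (a : k) + b ≠ 0) :
    foissyOp k (a + b) c (foissyOp k a b x y) z = ((a : k) / (a + b + c)) • ⁅⁅x, y⁆, z⁆ := by
  rw [foissyOp, foissyOp, smul_lie, smul_smul, Nat.cast_add, div_mul_div_comm,
    mul_comm (a + b : k), mul_div_mul_right _ _ hab]

theorem foissyOp_foissyOp_right (a b c : ℕ) (x y z : G) :
    foissyOp k a (b + c) x (foissyOp k b c y z)
      = ((a : k) / (a + b + c) * (b / (b + c))) • ⁅x, ⁅y, z⁆⁆ := by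
  rw [foissyOp, foissyOp, lie_smul, smul_smul, Nat.cast_add, add_assoc]

theorem foissyOp_associator_eq (a b c : ℕ) (x y z : G) (hab : (a : k) + b ≠ 0)
    (hbc : (b : k) + c ≠ 0) :
    foissyOp k (a + b) c (foissyOp k a b x y) z - foissyOp k a (b + c) x (foissyOp k b c y z)
      = ((a : k) / (a + b + c)) • (((c : k) / (b + c)) • ⁅x, ⁅y, z⁆⁆ - ⁅y, ⁅x, z⁆⁆) := by
  have hbc' : (b : k) / (b + c) = 1 - c / (b + c) := by field_simp; ring
  rw [foissyOp_foissyOp_left a b c x y z hab, foissyOp_foissyOp_right, mul_smul, ← smul_sub,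
    hbc', eq_sub_of_add_eq (leibniz_lie x y z).symm]
  module

end

theorem foissy_preLie_general
    (k : Type*) (G : Type*) [Field k] [CharZero k] [LieRing G] [LieAlgebra k G]
    (a b c : ℕ) (hb : 0 < b) (hc : 0 < c)
    (x y z : G) :
    foissyOp k (a + b) c (foissyOp k a b x y) z - foissyOp k a (b + c) x (foissyOp k b c y z)
      = foissyOp k (a + c) b (foissyOp k a c x z) y
        - foissyOp k a (c + b) x (foissyOp k c b z y) := by
  have hsum : ∀ m n : ℕ, 0 < n → (m : k) + n ≠ 0 := fun m n hn => by
    exact_mod_cast (by omega : m + n ≠ 0)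
  have hweights : (c : k) / (b + c) + b / (c + b) = 1 := by
    rw [add_comm (c : k) b, ← add_div, add_comm (c : k), div_self (hsum b c hc)]
  rw [foissyOp_associator_eq a b c x y z (hsum a b hb) (hsum b c hc),
    foissyOp_associator_eq a c b x z y (hsum a c hc) (hsum c b hb), add_right_comm (a : k) c b,
    smul_lie_lie_sub_lie_lie_comm_of_add_eq_one hweights]

/-- for a Lie algebra `L = ⨁_{n>0} L n` over a field of characteristic
zero, the operation `x ◁ y := |x|/(|x|+|y|)·[x,y]` on homogeneous elements satisfies
the right pre-Lie identity. -/
theorem foissy_preLie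
    (k : Type*) (G : Type*) [Field k] [CharZero k] [LieRing G] [LieAlgebra k G]
    (L : ℕ → Submodule k G)
    (hgr : ∀ m n : ℕ, ∀ x y : G, x ∈ L m → y ∈ L n → ⁅x, y⁆ ∈ L (m + n))
    (a b c : ℕ) (ha : 0 < a) (hb : 0 < b) (hc : 0 < c)
    (x y z : G) (hx : x ∈ L a) (hy : y ∈ L b) (hz : z ∈ L c) :
    foissyOp k (a + b) c (foissyOp k a b x y) z - foissyOp k a (b + c) x (foissyOp k b c y z)
      = foissyOp k (a + c) b (foissyOp k a c x z) y
        - foissyOp k a (c + b) x (foissyOp k c b z y) :=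
  foissy_preLie_general k G a b c hb hc x y z
end

section
/- In a Lie algebra, if $f_1, \ldots, f_n$ are elements such that all iterated brackets are defined, then for any element $x$, $[\,[\cdots[[f_{i_1}, f_{i_2}], f_{i_3}]\cdots, f_{i_n}]^{op}, x]$ expands as follows: $[\mathrm{ad}_{f_n}\mathrm{ad}_{f_{n-1}}\cdots\mathrm{ad}_{f_2}(f_1),\, x] = \sum_{\sigma \in I_n} (-1)^{\sigma^{-1}(1)-1}\, \mathrm{ad}_{f_{\sigma(n)}}\mathrm{ad}_{f_{\sigma(n-1)}}\cdots\mathrm{ad}_{f_{\sigma(1)}}(x)$, where $I_n \subset S_n$ is the set of V-shaped permutations. -/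
/-- `adChain g x = ad_{g (n-1)} ∘ ⋯ ∘ ad_{g 0} (x)` in a Lie ring. -/
def adChain {L : Type*} [LieRing L] : ∀ {n : ℕ}, (Fin n → L) → L → L :=
  fun {n} g x => (List.finRange n).foldl (fun a i => ⁅g i, a⁆) x

/-- V-shaped permutations: `σ` strictly decreases until it hits the minimum value `0`
and strictly increases afterwards. -/
def VShaped {n : ℕ} (σ : Equiv.Perm (Fin (n + 1))) : Prop :=
  (∀ i j : Fin (n + 1), i < j → j ≤ σ⁻¹ 0 → σ j < σ i) ∧
  (∀ i j : Fin (n + 1), σ⁻¹ 0 ≤ i → i < j → σ i < σ j)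

instance {n : ℕ} : DecidablePred (VShaped (n := n)) := fun σ => by
  unfold VShaped; infer_instance

/-! By the Jacobi identity `⁅⁅a, y⁆, x⁆ = ⁅a, ⁅y, x⁆⁆ - ⁅y, ⁅a, x⁆⁆`, with `a` the last element
`f (last m)` and `y` the chain of the others, the claim for `m + 1` elements follows from two
instances of the claim for `m`. On the combinatorial side, a V-shaped permutation of `Fin (m + 2)`
takes its maximal value at one of the two ends of the V, so it arises from a V-shaped permutation
`τ` of `Fin (m + 1)` either by appending that value on the right (`snocLast τ`, same sign) or by
prepending it on the left (`consLast τ`, which moves the position of `0` by one and flips the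
sign). These two families match the two terms of the Jacobi identity. -/

open Finset

section adChain

variable {L : Type*} [LieRing L]

@[simp] theorem adChain_zero (g : Fin 0 → L) (x : L) : adChain g x = x := rfl

theorem adChain_succ {n : ℕ} (g : Fin (n + 1) → L) (x : L) :
    adChain g x = adChain (fun i => g i.succ) ⁅g 0, x⁆ := by
  simp only [adChain, List.finRange_succ, List.foldl_cons, List.foldl_map]

theorem adChain_castSucc {n : ℕ} (g : Fin (n + 1) → L) (x : L) :
    adChain g x = ⁅g (Fin.last n), adChain (fun i => g i.castSucc) x⁆ := by
  simp only [adChain, List.finRange_succ_last, List.foldl_append, List.foldl_map,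
    List.foldl_cons, List.foldl_nil]

end adChain

namespace Equiv.Perm

variable {n : ℕ}

def snocLast (τ : Perm (Fin (n + 1))) : Perm (Fin (n + 2)) :=
  permCongr finSuccEquivLast.symm τ.optionCongr

def consLast (τ : Perm (Fin (n + 1))) : Perm (Fin (n + 2)) :=
  snocLast τ * (finRotate (n + 2))⁻¹

@[simp] theorem snocLast_castSucc (τ : Perm (Fin (n + 1))) (i : Fin (n + 1)) :
    snocLast τ i.castSucc = (τ i).castSucc := by
  simp [snocLast, permCongr_apply]

@[simp] theorem snocLast_last (τ : Perm (Fin (n + 1))) :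
    snocLast τ (Fin.last (n + 1)) = Fin.last (n + 1) := by
  simp [snocLast, permCongr_apply]

@[simp] theorem consLast_zero (τ : Perm (Fin (n + 1))) :
    consLast τ 0 = Fin.last (n + 1) := by
  rw [consLast, mul_apply, inv_eq_iff_eq.mpr finRotate_last.symm, snocLast_last]

@[simp] theorem consLast_succ (τ : Perm (Fin (n + 1))) (i : Fin (n + 1)) :
    consLast τ i.succ = (τ i).castSucc := by
  rw [consLast, mul_apply, inv_eq_iff_eq.mpr (by rw [finRotate_apply, Fin.coeSucc_eq_succ]),
    snocLast_castSucc]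

theorem snocLast_inv_zero (τ : Perm (Fin (n + 1))) :
    (snocLast τ)⁻¹ 0 = (τ⁻¹ 0).castSucc := by
  rw [inv_eq_iff_eq, snocLast_castSucc]
  simp

theorem consLast_inv_zero (τ : Perm (Fin (n + 1))) :
    (consLast τ)⁻¹ 0 = (τ⁻¹ 0).succ := by
  rw [inv_eq_iff_eq, consLast_succ]
  simp

theorem snocLast_injective : Function.Injective (snocLast (n := n)) := by
  intro τ τ' h
  ext i
  simpa using congr(($h i.castSucc : ℕ))

theorem consLast_injective : Function.Injective (consLast (n := n)) :=
  fun _ _ h => snocLast_injective (mul_right_cancel h)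

theorem exists_snocLast_eq {σ : Perm (Fin (n + 2))}
    (h : σ (Fin.last (n + 1)) = Fin.last (n + 1)) : ∃ τ, snocLast τ = σ := by
  set e := permCongr finSuccEquivLast σ
  have he : e none = none := by simp [e, permCongr_apply, h]
  have hτ : (removeNone e).optionCongr = e := by
    simp [he, ← Perm.one_def]
  exact ⟨removeNone e, by rw [snocLast, hτ, ← permCongr_symm, symm_apply_apply]⟩

theorem exists_consLast_eq {σ : Perm (Fin (n + 2))} (h : σ 0 = Fin.last (n + 1)) :
    ∃ τ, consLast τ = σ := by
  obtain ⟨τ, hτ⟩ := exists_snocLast_eq (σ := σ * finRotate (n + 2)) (by simp [h])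
  exact ⟨τ, by rw [consLast, hτ, mul_inv_cancel_right]⟩

theorem vShaped_snocLast_iff (τ : Perm (Fin (n + 1))) : VShaped (snocLast τ) ↔ VShaped τ := by
  simp [VShaped, Fin.forall_fin_succ' (n := n + 1), snocLast_inv_zero, Fin.castSucc_lt_last,
    (Fin.castSucc_lt_last _).not_gt]

theorem vShaped_consLast_iff (τ : Perm (Fin (n + 1))) : VShaped (consLast τ) ↔ VShaped τ := by
  simp [VShaped, Fin.forall_fin_succ (n := n + 1), consLast_inv_zero, Fin.castSucc_lt_last]

end Equiv.Perm

theorem VShaped.apply_zero_eq_last_or_apply_last_eq_last {n : ℕ} {σ : Equiv.Perm (Fin (n + 1))}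
    (h : VShaped σ) : σ 0 = Fin.last n ∨ σ (Fin.last n) = Fin.last n := by
  set p := σ⁻¹ (Fin.last n)
  have hp : σ p = Fin.last n := by simp [p]
  rcases le_total p (σ⁻¹ 0) with hle | hle
  · left
    rcases (Fin.zero_le p).eq_or_lt with h0 | h0
    · rw [h0, hp]
    · exact absurd (h.1 0 p h0 hle) (by simpa [hp] using Fin.le_last _)
  · right
    rcases (Fin.le_last p).eq_or_lt with hl | hl
    · exact hl ▸ hp
    · exact absurd (h.2 p _ hle hl) (by simpa [hp] using Fin.le_last _)

open Equiv.Perm in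
theorem sum_vShaped_succ {M : Type*} [AddCommMonoid M] {n : ℕ}
    (F : Equiv.Perm (Fin (n + 2)) → M) :
    ∑ σ ∈ univ.filter VShaped, F σ =
      ∑ τ ∈ univ.filter VShaped, (F (snocLast τ) + F (consLast τ)) := by
  set S := (univ : Finset (Equiv.Perm (Fin (n + 1)))).filter VShaped
  have hdisj : Disjoint (S.image snocLast) (S.image consLast) := by
    simp only [disjoint_left, mem_image, not_exists, not_and]
    rintro _ ⟨τ, -, rfl⟩ τ' - h
    have hlast := congr($h (Fin.last (n + 1)))
    rw [snocLast_last, ← Fin.succ_last, consLast_succ] at hlast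
    exact (Fin.castSucc_lt_last _).ne hlast
  have hS : univ.filter VShaped = S.image snocLast ∪ S.image consLast := by
    ext σ
    simp only [S, mem_union, mem_image, mem_filter, mem_univ, true_and]
    constructor
    · intro hσ
      rcases hσ.apply_zero_eq_last_or_apply_last_eq_last with h0 | hl
      · obtain ⟨τ, rfl⟩ := exists_consLast_eq h0
        exact .inr ⟨τ, (vShaped_consLast_iff τ).1 hσ, rfl⟩
      · obtain ⟨τ, rfl⟩ := exists_snocLast_eq hl
        exact .inl ⟨τ, (vShaped_snocLast_iff τ).1 hσ, rfl⟩
    · rintro (⟨τ, hτ, rfl⟩ | ⟨τ, hτ, rfl⟩)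
      · exact (vShaped_snocLast_iff τ).2 hτ
      · exact (vShaped_consLast_iff τ).2 hτ
  rw [hS, sum_union hdisj, sum_image snocLast_injective.injOn,
    sum_image consLast_injective.injOn, sum_add_distrib]

section

open Equiv.Perm

variable {L : Type*} [LieRing L] {n : ℕ}

theorem adChain_comp_snocLast (f : Fin (n + 2) → L) (τ : Equiv.Perm (Fin (n + 1))) (x : L) :
    adChain (fun i => f (snocLast τ i)) x =
      ⁅f (Fin.last _), adChain (fun i => f (τ i).castSucc) x⁆ := by
  rw [adChain_castSucc]
  simp only [snocLast_castSucc, snocLast_last]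

theorem adChain_comp_consLast (f : Fin (n + 2) → L) (τ : Equiv.Perm (Fin (n + 1))) (x : L) :
    adChain (fun i => f (consLast τ i)) x =
      adChain (fun i => f (τ i).castSucc) ⁅f (Fin.last _), x⁆ := by
  rw [adChain_succ]
  simp only [consLast_succ, consLast_zero]

end

theorem bracket_adChain_eq_sum_vshaped_general
    {L : Type*} [LieRing L]
    {m : ℕ} (f : Fin (m + 1) → L) (x : L) :
    ⁅adChain (fun i : Fin m => f i.succ) (f 0), x⁆
      = ∑ σ ∈ Finset.univ.filter (VShaped (n := m)),
          ((-1 : ℤ) ^ ((σ⁻¹ (0 : Fin (m + 1)) : Fin (m + 1)) : ℕ)) •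
            adChain (fun i => f (σ i)) x := by
  induction m generalizing x with
  | zero =>
    rw [show univ.filter (VShaped (n := 0)) = {1} by decide, sum_singleton]
    simp [adChain_castSucc]
  | succ m ih =>
    set g : Fin (m + 1) → L := fun i => f i.castSucc
    set y := adChain (fun i : Fin m => g i.succ) (g 0)
    calc ⁅adChain (fun i : Fin (m + 1) => f i.succ) (f 0), x⁆
        = ⁅f (Fin.last _), ⁅y, x⁆⁆ - ⁅y, ⁅f (Fin.last _), x⁆⁆ := by
          rw [adChain_castSucc, lie_lie]
          rfl
      _ = _ := by
          rw [ih, ih, lie_sum, sum_vShaped_succ, ← sum_sub_distrib]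
          refine sum_congr rfl fun τ _ => ?_
          rw [adChain_comp_snocLast, adChain_comp_consLast, Equiv.Perm.snocLast_inv_zero,
            Equiv.Perm.consLast_inv_zero,
            Fin.val_castSucc, Fin.val_succ, pow_succ, mul_neg_one, neg_smul, lie_zsmul,
            sub_eq_add_neg]

/-- in any Lie algebra, for elements `f 0, …, f n` (written `f₁,…,f_n`
1-based) and any `x`,
`[ad_{f_n}⋯ad_{f_2}(f_1), x] = ∑_{σ ∈ I_n} (-1)^{σ⁻¹(1)-1} ad_{f_{σ(n)}}⋯ad_{f_{σ(1)}}(x)`,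
where `I_n` is the set of V-shaped permutations. -/
theorem bracket_adChain_eq_sum_vshaped
    {R : Type*} {L : Type*} [CommRing R] [LieRing L] [LieAlgebra R L]
    {m : ℕ} (f : Fin (m + 1) → L) (x : L) :
    ⁅adChain (fun i : Fin m => f i.succ) (f 0), x⁆
      = ∑ σ ∈ Finset.univ.filter (VShaped (n := m)),
          ((-1 : ℤ) ^ ((σ⁻¹ (0 : Fin (m + 1)) : Fin (m + 1)) : ℕ)) •
            adChain (fun i => f (σ i)) x :=
  bracket_adChain_eq_sum_vshaped_general f x
end

section
/- For $\theta \in \mathbb{k}$, in the rational-function operad $\mathcal{RF}^\theta$ whose composition substitutes $F^\theta(x,y) = x+y+\theta x y$, the operations $\mu = 1 \in \mathcal{RF}^\theta(2)$ and $R = \frac{1}{x_1} \in \mathcal{RF}^\theta(1)$ satisfy the weight-$\theta$ Rota--Baxter identity. Concretely, $\frac{1}{x_1}\cdot\frac{1}{x_2} = \frac{1}{x_1+x_2+\theta x_1 x_2}\left(\frac{1}{x_1} + \frac{1}{x_2} + \theta\right)$ in $\mathbb{k}(x_1,x_2)$. -/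
open MvPolynomial

theorem inv_mul_inv_eq_inv_formalGroupLaw_mul {K : Type*} [Field K] {x y t : K} (hx : x ≠ 0)
    (hy : y ≠ 0) (hF : x + y + t * x * y ≠ 0) :
    x⁻¹ * y⁻¹ = (x + y + t * x * y)⁻¹ * (x⁻¹ + y⁻¹ + t) := by
  rw [eq_comm, inv_mul_eq_iff_eq_mul₀ hF]
  field_simp
  ring

theorem MvPolynomial.X_add_X_add_C_mul_X_mul_X_ne_zero {R σ : Type*} [CommSemiring R]
    [Nontrivial R] {i j : σ} (hij : i ≠ j) (a : R) :
    (X i + X j + C a * X i * X j : MvPolynomial σ R) ≠ 0 := by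
  classical
  intro h
  have heval := congrArg (eval fun k => if k = i then (1 : R) else 0) h
  simp [hij.symm] at heval

theorem rf_theta_rotaBaxter_general (k : Type*) [Field k] (θ : k) :
    let K := FractionRing (MvPolynomial (Fin 2) k)
    let x : Fin 2 → K := fun i => algebraMap (MvPolynomial (Fin 2) k) K (X i)
    let t : K := algebraMap (MvPolynomial (Fin 2) k) K (C θ)
    (x 0)⁻¹ * (x 1)⁻¹
      = (x 0 + x 1 + t * x 0 * x 1)⁻¹ * ((x 0)⁻¹ + (x 1)⁻¹ + t) := by
  intro K x t
  have hinj := IsFractionRing.injective (MvPolynomial (Fin 2) k) K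
  refine inv_mul_inv_eq_inv_formalGroupLaw_mul ?_ ?_ ?_
  · exact (map_ne_zero_iff _ hinj).2 (X_ne_zero 0)
  · exact (map_ne_zero_iff _ hinj).2 (X_ne_zero 1)
  · have hF := X_add_X_add_C_mul_X_mul_X_ne_zero (R := k) (zero_ne_one' (Fin 2)) θ
    simpa [x, t] using (map_ne_zero_iff _ hinj).2 hF

/-- in the rational-function operad `RF^θ` built on the formal group law
`F^θ(x,y) = x + y + θxy`, the operations `μ = 1` and `R = 1/x₁` satisfy the weight-`θ`
Rota–Baxter identity; concretely, in `k(x₁,x₂)`,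
`(1/x₁)(1/x₂) = (1/(x₁+x₂+θx₁x₂))·(1/x₁ + 1/x₂ + θ)`. -/
theorem rf_theta_rotaBaxter (k : Type*) [Field k] [CharZero k] (θ : k) :
    let K := FractionRing (MvPolynomial (Fin 2) k)
    let x : Fin 2 → K := fun i => algebraMap (MvPolynomial (Fin 2) k) K (X i)
    let t : K := algebraMap (MvPolynomial (Fin 2) k) K (C θ)
    (x 0)⁻¹ * (x 1)⁻¹
      = (x 0 + x 1 + t * x 0 * x 1)⁻¹ * ((x 0)⁻¹ + (x 1)⁻¹ + t) :=
  rf_theta_rotaBaxter_general k θ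
end

section
/- In a dendriform algebra with an adjoined unit-like element $d$ satisfying $d \prec u = 0$ and $u \succ d = 0$ for all elements $u$, suppose elements $\alpha$ and $\beta$ of the completed algebra satisfy $\beta \prec (d+\alpha) = \alpha + (d+\alpha) \succ \beta$. Then, writing $\beta^{\prec 1} = \beta$, $\beta^{\prec(k+1)} = \beta \prec \beta^{\prec k}$, and $uv = u \prec v + u \succ v$ for the total product, one has $\left(1 + \sum_{k\ge 1}\beta^{\prec k}\right) d = (d+\alpha)\left(1 + \sum_{k\ge 1}\beta^{\prec k}\right)$. -/
/-!
Extend `≺` and `≻` to weight-graded series `ℕ → A` by the Cauchy product; the dendriform axioms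
survive because the Cauchy product is associative along any associativity law of the coefficients.
Put `E = d + α` and `B = ∑_{k≥1} β^{≺k}`, so that `B = β + β ≺ B`. The first two dendriform axioms,
`d ≺ · = 0`, `· ≻ d = 0` and the hypothesis `β ≺ E = α + E ≻ β` give `E B = E ≻ β + β ≺ (E B)` and
then show that the defect `X = B d - α - E B` satisfies `X = β ≺ X`. As `β` has no component of
weight zero, `X = 0` weight by weight, and `X = 0` is the claimed identity after cancelling `d`.
-/

/-- Weight components of the iterated left powers `β^{≺(k+1)}` of the series
`β = ∑_{i≥1} b i`: `precPow prec b k n` is the weight-`n` component of `β^{≺(k+1)}`. -/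
def precPow {A : Type*} [AddCommMonoid A] (prec : A → A → A) (b : ℕ → A) :
    ℕ → ℕ → A
  | 0, n => b n
  | k + 1, n => ∑ i ∈ Finset.range (n + 1), prec (b i) (precPow prec b k (n - i))

open Finset

namespace AddMonoidHom

variable {M N P : Type*} [AddZeroClass M] [AddZeroClass N] [AddCommGroup P]

def mk₂ (f : M → N → P) (hl : ∀ x y z, f (x + y) z = f x z + f y z)
    (hr : ∀ x y z, f x (y + z) = f x y + f x z) : M →+ N →+ P :=
  mk' (fun x => mk' (f x) (hr x)) fun x y => ext (hl x y)

end AddMonoidHom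

section CauchyProduct

variable {A : Type*} [AddCommGroup A]

def cauchyProd (f : A →+ A →+ A) : (ℕ → A) →+ (ℕ → A) →+ (ℕ → A) :=
  .mk₂ (fun u v n => ∑ i ∈ range (n + 1), f (u i) (v (n - i)))
    (fun u v w => by funext n; simp [sum_add_distrib])
    (fun u v w => by funext n; simp [sum_add_distrib])

theorem cauchyProd_apply (f : A →+ A →+ A) (u v : ℕ → A) (n : ℕ) :
    cauchyProd f u v n = ∑ i ∈ range (n + 1), f (u i) (v (n - i)) :=
  rfl

theorem cauchyProd_apply_eq_sum_antidiagonal (f : A →+ A →+ A) (u v : ℕ → A) (n : ℕ) :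
    cauchyProd f u v n = ∑ p ∈ antidiagonal n, f (u p.1) (v p.2) :=
  (Nat.sum_antidiagonal_eq_sum_range_succ_mk (fun p => f (u p.1) (v p.2)) n).symm

theorem cauchyProd_add (f g : A →+ A →+ A) :
    cauchyProd (f + g) = cauchyProd f + cauchyProd g := by
  ext u v n
  simp [cauchyProd_apply, sum_add_distrib]

theorem cauchyProd_assoc {f g h k : A →+ A →+ A}
    (hfg : ∀ x y z, f (g x y) z = h x (k y z)) (u v w : ℕ → A) :
    cauchyProd f (cauchyProd g u v) w = cauchyProd h u (cauchyProd k v w) := by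
  ext n
  simp only [cauchyProd_apply_eq_sum_antidiagonal, map_sum, AddMonoidHom.finsetSum_apply,
    hfg, sum_sigma']
  apply sum_nbij' (fun ⟨⟨_, j⟩, ⟨k, l⟩⟩ ↦ ⟨(k, l + j), (l, j)⟩)
    (fun ⟨⟨i, _⟩, ⟨k, l⟩⟩ ↦ ⟨(i + k, l), (i, k)⟩) <;> aesop (add simp [add_assoc])

theorem cauchyProd_single_zero_left (f : A →+ A →+ A) (x : A) (u : ℕ → A) (n : ℕ) :
    cauchyProd f (Pi.single 0 x) u n = f x (u n) := by
  rw [cauchyProd_apply, sum_eq_single 0 (fun i _ hi => by simp [hi]) (by simp)]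
  simp

theorem cauchyProd_single_zero_right (f : A →+ A →+ A) (x : A) (u : ℕ → A) (n : ℕ) :
    cauchyProd f u (Pi.single 0 x) n = f (u n) x := by
  rw [cauchyProd_apply_eq_sum_antidiagonal,
    sum_eq_single (n, 0) (fun p hp hne => ?_) (by simp)]
  · simp
  · have : p.2 ≠ 0 := fun h => hne (Prod.ext (by simpa [h] using mem_antidiagonal.1 hp) h)
    simp [this]

theorem eq_zero_of_eq_cauchyProd_self (f : A →+ A →+ A) {b X : ℕ → A} (hb : b 0 = 0)
    (hX : X = cauchyProd f b X) : X = 0 := by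
  funext n
  induction n using Nat.strong_induction_on with
  | _ n ih =>
    rw [hX, cauchyProd_apply]
    refine sum_eq_zero fun i hi => ?_
    rcases Nat.eq_zero_or_pos i with rfl | hi0
    · simp [hb]
    · rw [ih (n - i) (by have := mem_range.1 hi; omega), Pi.zero_apply, map_zero]

end CauchyProduct

section Dendriform

variable {S : Type*} [AddCommGroup S] (P Q : S →+ S →+ S)

theorem gauge_defect_eq_prec (hd₁ : ∀ x y z, P (P x y) z = P x ((P + Q) y z))
    (hd₂ : ∀ x y z, P (Q x y) z = Q x (P y z)) {d α β B : S}
    (hPd : ∀ u, P d u = 0) (hQd : ∀ u, Q u d = 0)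
    (hB : B = β + P β B) (hβ : P β (d + α) = α + Q (d + α) β) :
    (P + Q) B d - α - (P + Q) (d + α) B
      = P β ((P + Q) B d - α - (P + Q) (d + α) B) := by
  set R := (P + Q) (d + α) B
  have hBd : (P + Q) B d = P β d + P β ((P + Q) B d) := by
    simp only [AddMonoidHom.add_apply, hQd, add_zero]
    conv_lhs => rw [hB]
    rw [map_add, AddMonoidHom.add_apply, hd₁, AddMonoidHom.add_apply, AddMonoidHom.add_apply,
      hQd, add_zero]
  have hQβ : Q (d + α) β = P β (d + α) - α := by rw [hβ]; abel
  have hQB : Q (d + α) B = Q (d + α) β + P (Q (d + α) β) B := by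
    conv_lhs => rw [hB]
    rw [map_add, ← hd₂]
  have hR : R = Q (d + α) β + P β R :=
    calc R = P (d + α) B + Q (d + α) B := rfl
      _ = P α B + (Q (d + α) β + (P β R - P α B)) := by
        rw [hQB, hQβ, map_sub, AddMonoidHom.sub_apply, hd₁, map_add, AddMonoidHom.add_apply,
          hPd, zero_add, ← hQβ]
      _ = Q (d + α) β + P β R := by abel
  calc (P + Q) B d - α - R
      = P β d + P β ((P + Q) B d) - α - (Q (d + α) β + P β R) := by rw [← hBd, ← hR]
    _ = P β ((P + Q) B d - α - R) := by rw [hQβ, map_sub, map_sub, map_add]; abel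

end Dendriform

section PrecPow

variable {A : Type*} [AddCommGroup A] (P : A →+ A →+ A)

theorem precPow_eq_zero_of_le {b : ℕ → A} (hb : b 0 = 0) {k m : ℕ} (hmk : m ≤ k) :
    precPow (P · ·) b k m = 0 := by
  induction k generalizing m with
  | zero => rw [Nat.le_zero.1 hmk]; exact hb
  | succ k ih =>
    refine sum_eq_zero fun i _ => ?_
    rcases Nat.eq_zero_or_pos i with rfl | hi
    · simp [hb]
    · rw [ih (by omega)]; exact map_zero _

/-- The weight-`m` component of `∑_{k≥1} β^{≺k}`: for `b 0 = 0` the powers `β^{≺k}` with `k > m`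
vanish in weight `m`. -/
def precPowSum (b : ℕ → A) (m : ℕ) : A :=
  ∑ k ∈ range m, precPow (P · ·) b k m

theorem sum_range_precPow_of_le {b : ℕ → A} (hb : b 0 = 0) {m N : ℕ} (hmN : m ≤ N) :
    ∑ k ∈ range N, precPow (P · ·) b k m = precPowSum P b m :=
  (sum_subset (range_subset_range.2 hmN) fun _ _ hk =>
    precPow_eq_zero_of_le P hb (by simpa using hk)).symm

theorem precPowSum_eq_add_cauchyProd {b : ℕ → A} (hb : b 0 = 0) :
    precPowSum P b = b + cauchyProd P b (precPowSum P b) := by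
  funext n
  rcases n with _ | n
  · simp [precPowSum, cauchyProd_apply, hb]
  calc precPowSum P b (n + 1)
      = b (n + 1) + ∑ k ∈ range n, ∑ i ∈ range (n + 2),
          P (b i) (precPow (P · ·) b k (n + 1 - i)) := by
        rw [precPowSum, sum_range_succ', add_comm]; rfl
    _ = b (n + 1) + ∑ i ∈ range (n + 2), P (b i) (precPowSum P b (n + 1 - i)) := by
        rw [sum_comm]
        congr 1
        refine sum_congr rfl fun i _ => ?_
        rcases Nat.eq_zero_or_pos i with rfl | hi0
        · simp [hb]
        · rw [← map_sum, sum_range_precPow_of_le P hb (by omega)]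

theorem cauchyProd_precPowSum_single_zero (f : A →+ A →+ A) (b : ℕ → A) (x : A) (n : ℕ) :
    cauchyProd f (precPowSum P b) (Pi.single 0 x) n
      = ∑ k ∈ range n, f (precPow (P · ·) b k n) x := by
  rw [cauchyProd_single_zero_right, precPowSum, map_sum, AddMonoidHom.finsetSum_apply]

theorem cauchyProd_single_add_precPowSum (f : A →+ A →+ A) {b : ℕ → A} (hb : b 0 = 0) (x : A)
    (a : ℕ → A) (n : ℕ) :
    cauchyProd f (Pi.single 0 x + a) (precPowSum P b) n
      = ∑ k ∈ range n, (f x (precPow (P · ·) b k n)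
          + ∑ i ∈ range (n + 1), f (a i) (precPow (P · ·) b k (n - i))) := by
  rw [map_add, AddMonoidHom.add_apply, Pi.add_apply, cauchyProd_single_zero_left,
    cauchyProd_apply, sum_add_distrib, sum_comm, precPowSum, map_sum]
  congr 1
  refine sum_congr rfl fun i _ => ?_
  rw [← sum_range_precPow_of_le P hb (Nat.sub_le n i), map_sum]

end PrecPow

theorem dendriform_gauge_identity_general
    {A : Type*} [AddCommGroup A]
    (prec succ : A → A → A)
    (prec_add_left : ∀ x y z : A, prec (x + y) z = prec x z + prec y z)
    (prec_add_right : ∀ x y z : A, prec x (y + z) = prec x y + prec x z)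
    (succ_add_left : ∀ x y z : A, succ (x + y) z = succ x z + succ y z)
    (succ_add_right : ∀ x y z : A, succ x (y + z) = succ x y + succ x z)
    (dend₁ : ∀ x y z : A, prec (prec x y) z = prec x (prec y z + succ y z))
    (dend₂ : ∀ x y z : A, prec (succ x y) z = succ x (prec y z))
    (d : A) (a b : ℕ → A) (ha0 : a 0 = 0) (hb0 : b 0 = 0)
    (hd_prec : ∀ u : A, prec d u = 0)
    (hd_succ : ∀ u : A, succ u d = 0)
    (hβ : ∀ n : ℕ, 1 ≤ n →
      prec (b n) d + ∑ i ∈ Finset.range (n + 1), prec (b i) (a (n - i))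
        = a n + succ d (b n)
          + ∑ i ∈ Finset.range (n + 1), succ (a i) (b (n - i))) :
    ∀ n : ℕ, 1 ≤ n →
      ∑ k ∈ Finset.range n,
          (prec (precPow prec b k n) d + succ (precPow prec b k n) d)
        = a n + ∑ k ∈ Finset.range n,
            ((prec d (precPow prec b k n) + succ d (precPow prec b k n))
              + ∑ i ∈ Finset.range (n + 1),
                  (prec (a i) (precPow prec b k (n - i))
                    + succ (a i) (precPow prec b k (n - i)))) := by
  obtain ⟨P, rfl⟩ : ∃ P : A →+ A →+ A, (P · ·) = prec :=
    ⟨.mk₂ prec prec_add_left prec_add_right, rfl⟩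
  obtain ⟨Q, rfl⟩ : ∃ Q : A →+ A →+ A, (Q · ·) = succ :=
    ⟨.mk₂ succ succ_add_left succ_add_right, rfl⟩
  have hd₁ : ∀ u v w, cauchyProd P (cauchyProd P u v) w
      = cauchyProd P u ((cauchyProd P + cauchyProd Q) v w) := fun u v w => by
    rw [← cauchyProd_add]; exact cauchyProd_assoc (by simpa using dend₁) u v w
  have hd₂ : ∀ u v w, cauchyProd P (cauchyProd Q u v) w = cauchyProd Q u (cauchyProd P v w) :=
    cauchyProd_assoc dend₂
  have hβ' : cauchyProd P b (Pi.single 0 d + a) = a + cauchyProd Q (Pi.single 0 d + a) b := by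
    funext n
    simp only [map_add, AddMonoidHom.add_apply, Pi.add_apply, cauchyProd_single_zero_left,
      cauchyProd_single_zero_right]
    rcases n.eq_zero_or_pos with rfl | hn
    · simp [cauchyProd_apply, ha0, hb0]
    · rw [← add_assoc]; exact hβ n hn
  have hdefect := eq_zero_of_eq_cauchyProd_self P hb0 <| gauge_defect_eq_prec _ _ hd₁ hd₂
    (fun u => funext (cauchyProd_single_zero_left P d u · ▸ hd_prec _))
    (fun u => funext (cauchyProd_single_zero_right Q d u · ▸ hd_succ _))
    (precPowSum_eq_add_cauchyProd P hb0) hβ'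
  intro n _
  have key := congrFun hdefect n
  rw [← cauchyProd_add, Pi.sub_apply, Pi.sub_apply, cauchyProd_precPowSum_single_zero,
    cauchyProd_single_add_precPowSum P _ hb0, sub_sub, Pi.zero_apply, sub_eq_zero] at key
  exact key

/-- in a (weight-graded, componentwise complete) dendriform algebra
with an adjoined element `d` satisfying `d ≺ u = 0` and `u ≻ d = 0`, if the series
`α = ∑ a i` and `β = ∑ b i` satisfy `β ≺ (d+α) = α + (d+α) ≻ β`, then
`(1 + ∑_k β^{≺k}) d = (d+α)(1 + ∑_k β^{≺k})`, where `uv = u ≺ v + u ≻ v`.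
All series identities are stated componentwise in the weight grading. -/
theorem dendriform_gauge_identity
    {A : Type*} [AddCommGroup A]
    (prec succ : A → A → A)
    (prec_add_left : ∀ x y z : A, prec (x + y) z = prec x z + prec y z)
    (prec_add_right : ∀ x y z : A, prec x (y + z) = prec x y + prec x z)
    (succ_add_left : ∀ x y z : A, succ (x + y) z = succ x z + succ y z)
    (succ_add_right : ∀ x y z : A, succ x (y + z) = succ x y + succ x z)
    (dend₁ : ∀ x y z : A, prec (prec x y) z = prec x (prec y z + succ y z))
    (dend₂ : ∀ x y z : A, prec (succ x y) z = succ x (prec y z))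
    (dend₃ : ∀ x y z : A, succ (prec x y + succ x y) z = succ x (succ y z))
    (d : A) (a b : ℕ → A) (ha0 : a 0 = 0) (hb0 : b 0 = 0)
    (hd_prec : ∀ u : A, prec d u = 0)
    (hd_succ : ∀ u : A, succ u d = 0)
    (hβ : ∀ n : ℕ, 1 ≤ n →
      prec (b n) d + ∑ i ∈ Finset.range (n + 1), prec (b i) (a (n - i))
        = a n + succ d (b n)
          + ∑ i ∈ Finset.range (n + 1), succ (a i) (b (n - i))) :
    ∀ n : ℕ, 1 ≤ n →
      ∑ k ∈ Finset.range n,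
          (prec (precPow prec b k n) d + succ (precPow prec b k n) d)
        = a n + ∑ k ∈ Finset.range n,
            ((prec d (precPow prec b k n) + succ d (precPow prec b k n))
              + ∑ i ∈ Finset.range (n + 1),
                  (prec (a i) (precPow prec b k (n - i))
                    + succ (a i) (precPow prec b k (n - i)))) :=
  dendriform_gauge_identity_general prec succ prec_add_left prec_add_right succ_add_left
    succ_add_right dend₁ dend₂ d a b ha0 hb0 hd_prec hd_succ hβ
end

section
/- In the field of rational functions $\mathbb{Q}(x_1, \ldots, x_n)$, the functions $\left\{ \prod_{j=1}^{n-1} \frac{1}{x_{\rho(1)} + \cdots + x_{\rho(j)}} : \rho \in S_n \right\}$ are linearly independent over $\mathbb{Q}$ (in fact they form a basis of the image of the arity-$n$ component of the Zinbiel operad inside the rational-function operad). -/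
/-!
Clearing denominators, it suffices that the cofactors `∏_{ρ' ≠ ρ} d_ρ'` of the denominators
`d_ρ = ∏_j (x_{ρ(0)} + ⋯ + x_{ρ(j)})` are linearly independent polynomials. Fix `σ` and substitute
`x_i ↦ t ^ σ⁻¹(i)`. The partial sum `x_{ρ(0)} + ⋯ + x_{ρ(j)}` becomes a sum of distinct powers of
`t` of degree `max_{s ≤ j} σ⁻¹ρ(s) ≥ j`, and these bounds are all equalities only for `ρ = σ`.
So `d_σ` has strictly the smallest degree after the substitution, its cofactor strictly the
largest, and the leading coefficient of that cofactor reads off the coefficient of `σ` in any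
linear relation.
-/

open MvPolynomial

/-- The rational function `∏_{j=1}^{n-1} 1/(x_{ρ(1)} + ⋯ + x_{ρ(j)})` associated to a
permutation `ρ ∈ S_n`, in the field of rational functions `ℚ(x₁,…,xₙ)`. -/
noncomputable def zinbielBasisElt (n : ℕ) (ρ : Equiv.Perm (Fin n)) :
    FractionRing (MvPolynomial (Fin n) ℚ) :=
  ∏ j ∈ Finset.range (n - 1),
    (∑ t ∈ Finset.univ.filter (fun t : Fin n => (t : ℕ) ≤ j),
      algebraMap (MvPolynomial (Fin n) ℚ) (FractionRing (MvPolynomial (Fin n) ℚ))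
        (X (ρ t)))⁻¹

open Finset Polynomial

theorem LinearIndependent.inv_algebraMap_of_prod_erase {R A K ι : Type*} [CommSemiring R]
    [CommSemiring A] [Field K] [Algebra R A] [Algebra A K] [Module R K] [IsScalarTower R A K]
    [FaithfulSMul A K] [Fintype ι] [DecidableEq ι] {d : ι → A}
    (hd : ∀ i, d i ≠ 0) (h : LinearIndependent R fun i ↦ ∏ j ∈ univ.erase i, d j) :
    LinearIndependent R fun i ↦ (algebraMap A K (d i))⁻¹ := by
  have hinj := FaithfulSMul.algebraMap_injective A K
  refine .of_comp ((LinearMap.mulLeft A (algebraMap A K (∏ i, d i))).restrictScalars R) ?_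
  have hcomp : ((LinearMap.mulLeft A (algebraMap A K (∏ i, d i))).restrictScalars R ∘
      fun i ↦ (algebraMap A K (d i))⁻¹) =
      (Algebra.linearMap A K).restrictScalars R ∘ fun i ↦ ∏ j ∈ univ.erase i, d j := by
    ext i
    have hdi : algebraMap A K (d i) ≠ 0 := (map_ne_zero_iff _ hinj).mpr (hd i)
    simp only [Function.comp_apply, LinearMap.restrictScalars_apply, LinearMap.mulLeft_apply,
      Algebra.linearMap_apply, ← mul_prod_erase univ d (mem_univ i), map_mul]
    rw [mul_right_comm, mul_inv_cancel₀ hdi, one_mul]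
  rw [hcomp]
  exact h.map_injOn _ hinj.injOn

theorem Polynomial.linearIndependent_of_natDegree_lt {R M ι : Type*} [Ring R]
    [NoZeroDivisors R] [AddCommGroup M] [Module R M] [Fintype ι] {v : ι → M}
    (ψ : ι → M →ₗ[R] R[X]) (hne : ∀ i, ψ i (v i) ≠ 0)
    (hlt : ∀ i j, j ≠ i → (ψ i (v j)).natDegree < (ψ i (v i)).natDegree) :
    LinearIndependent R v := by
  refine Fintype.linearIndependent_iff.mpr fun c hc i ↦ ?_
  have hcoeff := congrArg (fun x ↦ (ψ i x).coeff (ψ i (v i)).natDegree) hc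
  simp only [map_sum, map_smul, finsetSum_coeff, coeff_smul, smul_eq_mul, map_zero,
    coeff_zero] at hcoeff
  rw [sum_eq_single i (fun j _ hji ↦ by rw [coeff_eq_zero_of_natDegree_lt (hlt i j hji), mul_zero])
    (by simp)] at hcoeff
  exact (mul_eq_zero.mp hcoeff).resolve_right (by simpa using hne i)

theorem Polynomial.natDegree_sum_X_pow {R ι : Type*} [Semiring R] [Nontrivial R] {s : Finset ι}
    {f : ι → ℕ} (hf : Set.InjOn f s) : (∑ i ∈ s, (X : R[X]) ^ f i).natDegree = s.sup f := by
  rw [natDegree_sum_eq_of_disjoint]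
  · simp
  · intro i hi j hj hij
    simpa using hf.ne hi.1 hj.1 hij

theorem Polynomial.sum_X_pow_ne_zero {R ι : Type*} [Semiring R] [Nontrivial R] {s : Finset ι}
    {f : ι → ℕ} (hf : Set.InjOn f s) (hs : s.Nonempty) : ∑ i ∈ s, (X : R[X]) ^ f i ≠ 0 := by
  obtain ⟨i, hi⟩ := hs
  intro h
  have := congrArg (coeff · (f i)) h
  rw [finsetSum_coeff, sum_eq_single i] at this
  · simp at this
  · intro j hj hji
    rw [coeff_X_pow, if_neg (hf.ne hi hj hji.symm)]
  · exact absurd hi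

theorem Polynomial.natDegree_prod_erase_lt {R ι : Type*} [CommRing R] [IsDomain R]
    [DecidableEq ι] {s : Finset ι} {q : ι → R[X]} (hq : ∀ i ∈ s, q i ≠ 0) {i j : ι}
    (hi : i ∈ s) (hj : j ∈ s) (h : (q i).natDegree < (q j).natDegree) :
    (∏ k ∈ s.erase j, q k).natDegree < (∏ k ∈ s.erase i, q k).natDegree := by
  have hne : ∀ i ∈ s, ∏ k ∈ s.erase i, q k ≠ 0 := fun i _ ↦
    prod_ne_zero_iff.mpr fun k hk ↦ hq k (mem_of_mem_erase hk)
  have hi' := congrArg natDegree (mul_prod_erase s q hi)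
  have hj' := congrArg natDegree (mul_prod_erase s q hj)
  rw [natDegree_mul (hq i hi) (hne i hi)] at hi'
  rw [natDegree_mul (hq j hj) (hne j hj)] at hj'
  omega

theorem Equiv.Perm.exists_lt_apply_of_ne_one {n : ℕ} {π : Equiv.Perm (Fin n)} (hπ : π ≠ 1) :
    ∃ j, j < π j := by
  by_contra! h
  apply hπ
  have hsum : ∑ j, (π j : ℕ) = ∑ j : Fin n, (j : ℕ) := Equiv.sum_comp π (fun j ↦ (j : ℕ))
  ext j
  exact (sum_eq_sum_iff_of_le fun j _ ↦ Fin.le_def.mp (h j)).mp hsum j (mem_univ j)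

theorem Fin.filter_val_le_eq_Iic {n j : ℕ} (hj : j < n) :
    univ.filter (fun t : Fin n ↦ (t : ℕ) ≤ j) = Iic ⟨j, hj⟩ := by
  ext t
  simp [Fin.le_def]

namespace ZinbielBasis

open Equiv

variable {n : ℕ}

def prefixMax (π : Perm (Fin n)) (j : ℕ) : ℕ :=
  (univ.filter fun t : Fin n ↦ (t : ℕ) ≤ j).sup fun t ↦ (π t : ℕ)

lemma le_prefixMax (π : Perm (Fin n)) {j : ℕ} (hj : j < n) : j ≤ prefixMax π j := by
  have hmaps : ((Iic (⟨j, hj⟩ : Fin n)).image fun t ↦ (π t : ℕ)) ⊆ range (prefixMax π j + 1) :=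
    fun k hk ↦ by
      obtain ⟨t, ht, rfl⟩ := mem_image.mp hk
      rw [← Fin.filter_val_le_eq_Iic hj] at ht
      exact mem_range_succ_iff.mpr (le_sup (f := fun t ↦ (π t : ℕ)) ht)
  have hcard := card_le_card hmaps
  rw [card_image_of_injective _ fun a b h ↦ π.injective (Fin.ext h), Fin.card_Iic,
    card_range] at hcard
  simpa using hcard

lemma prefixMax_one {j : ℕ} (hj : j < n) : prefixMax (1 : Perm (Fin n)) j = j :=
  le_antisymm (Finset.sup_le fun t ht ↦ by simpa using ht)
    (le_prefixMax 1 hj)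

lemma lt_prefixMax_of_lt_apply {π : Perm (Fin n)} {j : Fin n} (h : j < π j) :
    (j : ℕ) < prefixMax π j :=
  lt_of_lt_of_le h (le_sup (f := fun t ↦ (π t : ℕ)) (by simp))

lemma sum_prefixMax_one_lt {π : Perm (Fin n)} (hπ : π ≠ 1) :
    ∑ j ∈ range (n - 1), prefixMax (1 : Perm (Fin n)) j < ∑ j ∈ range (n - 1), prefixMax π j := by
  obtain ⟨j, hj⟩ := Perm.exists_lt_apply_of_ne_one hπ
  have hjn : (j : ℕ) < n - 1 := by have := (π j).isLt; omega
  refine sum_lt_sum (fun k hk ↦ ?_) ⟨j, mem_range.mpr hjn, ?_⟩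
  · have hkn : k < n := by have := mem_range.mp hk; omega
    exact (prefixMax_one hkn).trans_le (le_prefixMax π hkn)
  · exact (prefixMax_one j.isLt).trans_lt (lt_prefixMax_of_lt_apply hj)

variable {R : Type*} [CommSemiring R]

noncomputable def partialSum (ρ : Perm (Fin n)) (j : ℕ) : MvPolynomial (Fin n) R :=
  ∑ t ∈ univ.filter (fun t : Fin n ↦ (t : ℕ) ≤ j), MvPolynomial.X (ρ t)

noncomputable def denom (ρ : Perm (Fin n)) : MvPolynomial (Fin n) R :=
  ∏ j ∈ range (n - 1), partialSum ρ j

lemma zinbielBasisElt_eq (ρ : Perm (Fin n)) :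
    zinbielBasisElt n ρ =
      (algebraMap _ (FractionRing _) (denom ρ : MvPolynomial (Fin n) ℚ))⁻¹ := by
  simp only [zinbielBasisElt, denom, partialSum, map_prod, map_sum, prod_inv_distrib]

noncomputable def toPolynomial (σ : Perm (Fin n)) : MvPolynomial (Fin n) R →ₐ[R] R[X] :=
  aeval fun i ↦ Polynomial.X ^ (σ⁻¹ i : ℕ)

lemma toPolynomial_partialSum (σ ρ : Perm (Fin n)) (j : ℕ) :
    toPolynomial σ (partialSum ρ j : MvPolynomial (Fin n) R) =
      ∑ t ∈ univ.filter (fun t : Fin n ↦ (t : ℕ) ≤ j), Polynomial.X ^ ((σ⁻¹ * ρ) t : ℕ) := by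
  simp [toPolynomial, partialSum]

lemma natDegree_toPolynomial_partialSum [Nontrivial R] (σ ρ : Perm (Fin n)) (j : ℕ) :
    (toPolynomial σ (partialSum ρ j : MvPolynomial (Fin n) R)).natDegree =
      prefixMax (σ⁻¹ * ρ) j := by
  rw [toPolynomial_partialSum, natDegree_sum_X_pow]
  · rfl
  · exact (Fin.val_injective.comp (σ⁻¹ * ρ).injective).injOn

lemma toPolynomial_partialSum_ne_zero [Nontrivial R] (σ ρ : Perm (Fin n)) {j : ℕ} (hn : 0 < n) :
    toPolynomial σ (partialSum ρ j : MvPolynomial (Fin n) R) ≠ 0 := by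
  rw [toPolynomial_partialSum]
  exact sum_X_pow_ne_zero (Fin.val_injective.comp (σ⁻¹ * ρ).injective).injOn
    ⟨⟨0, hn⟩, by simp⟩

lemma toPolynomial_denom_ne_zero [IsDomain R] (σ ρ : Perm (Fin n)) :
    toPolynomial σ (denom ρ : MvPolynomial (Fin n) R) ≠ 0 := by
  rw [denom, map_prod, prod_ne_zero_iff]
  exact fun j hj ↦ toPolynomial_partialSum_ne_zero σ ρ (by have := mem_range.mp hj; omega)

lemma natDegree_toPolynomial_denom [IsDomain R] (σ ρ : Perm (Fin n)) :
    (toPolynomial σ (denom ρ : MvPolynomial (Fin n) R)).natDegree =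
      ∑ j ∈ range (n - 1), prefixMax (σ⁻¹ * ρ) j := by
  rw [denom, map_prod, natDegree_prod]
  · simp only [natDegree_toPolynomial_partialSum]
  · exact fun j hj ↦ toPolynomial_partialSum_ne_zero σ ρ (by have := mem_range.mp hj; omega)

lemma denom_ne_zero [IsDomain R] (ρ : Perm (Fin n)) : (denom ρ : MvPolynomial (Fin n) R) ≠ 0 :=
  fun h ↦ toPolynomial_denom_ne_zero 1 ρ (by rw [h, map_zero])

end ZinbielBasis

open ZinbielBasis in
/-- the `n!` rational functions
`∏_{j=1}^{n-1} 1/(x_{ρ(1)}+⋯+x_{ρ(j)})`, `ρ ∈ S_n`, are linearly independent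
over `ℚ` in `ℚ(x₁,…,xₙ)`. -/
theorem zinbiel_basis_linearIndependent (n : ℕ) :
    LinearIndependent ℚ (zinbielBasisElt n) := by
  rw [show zinbielBasisElt n = fun ρ ↦ (algebraMap _ (FractionRing _) (denom ρ))⁻¹ from
    funext zinbielBasisElt_eq]
  refine LinearIndependent.inv_algebraMap_of_prod_erase (A := MvPolynomial (Fin n) ℚ)
    denom_ne_zero ?_
  refine linearIndependent_of_natDegree_lt (fun σ ↦ (toPolynomial σ).toLinearMap)
    (fun σ ↦ ?_) (fun σ ρ hρ ↦ ?_)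
  · simpa [map_prod, prod_ne_zero_iff] using fun ρ _ ↦ toPolynomial_denom_ne_zero σ ρ
  · simp only [AlgHom.toLinearMap_apply, map_prod]
    refine natDegree_prod_erase_lt (fun ρ _ ↦ toPolynomial_denom_ne_zero σ ρ) (mem_univ σ)
      (mem_univ ρ) ?_
    rw [natDegree_toPolynomial_denom, natDegree_toPolynomial_denom, inv_mul_cancel]
    exact sum_prefixMax_one_lt (inv_mul_eq_one.not.mpr (Ne.symm hρ))
end

section
/- Let $\mathfrak{g}$ be a Lie algebra over a field of characteristic zero, and let $(f_i)_{i\ge1}$, $(\lambda_i)_{i\ge1}$ be elements of $\mathfrak{g}$ and $d \in \mathfrak{g}$ satisfying for all $n \ge 1$: $[f_n, d] = \lambda_n - \sum_{i+j=n,\ i,j\ge1} \frac{1}{j}[f_i, \lambda_j]$. Then for all $k \ge 1$ and $n \ge 1$: $\sum_{i_1+\cdots+i_k=n} \left(\prod_{j=1}^{k}\frac{1}{i_1+\cdots+i_j}\right) \mathrm{ad}_{f_{i_k}}\cdots\mathrm{ad}_{f_{i_1}}(d) = \sum_{i_1+\cdots+i_k=n} \left(\prod_{j=1}^{k}\frac{1}{i_1+\cdots+i_j}\right)\mathrm{ad}_{f_{i_k}}\cdots\mathrm{ad}_{f_{i_2}}(\lambda_{i_1})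 - \sum_{j_0+\cdots+j_k=n}\left(\prod_{j=0}^{k}\frac{1}{j_0+\cdots+j_j}\right)\mathrm{ad}_{f_{j_k}}\cdots\mathrm{ad}_{f_{j_1}}(\lambda_{j_0})$, where all indices in the sums are $\ge 1$. -/
/-- The coefficient `∏_{j=1}^{k} 1/(i₁ + ⋯ + i_j)` of a composition with blocks
`(i₁, …, i_k)`, valued in a field `K`. -/
noncomputable def compCoeff (K : Type*) [Field K] (l : List ℕ) : K :=
  ∏ j ∈ Finset.range l.length, (((l.take (j + 1)).sum : K))⁻¹

/-!
Write `S_k v n = ∑ compCoeff l • v l`, the sum over lists `l` of `k` positive integers with sum `n`.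
Splitting off the last block `m` of `l` divides its coefficient by `n`, so whenever
`v (l ++ [m]) = ⁅f m, v l⁆` we get `S_{k+1} v n = n⁻¹ • ∑_{0<m<n} ⁅f m, S_k v (n - m)⁆`.
Both sides of the identity obey this recursion in `k`, so the identity propagates from `k` to
`k + 1`; for `k = 1` it is the hypothesis multiplied by `n⁻¹`.
-/

def compositionBlocks : ℕ → ℕ → Finset (List ℕ)
  | 0, n => if n = 0 then {[]} else ∅
  | k + 1, n => (Finset.Icc 1 n).biUnion fun m => (compositionBlocks k (n - m)).image (· ++ [m])

theorem mem_compositionBlocks {k n : ℕ} {l : List ℕ} :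
    l ∈ compositionBlocks k n ↔ l.length = k ∧ l.sum = n ∧ ∀ i ∈ l, 0 < i := by
  induction k generalizing n l with
  | zero =>
    rw [List.length_eq_zero_iff]
    by_cases hn : n = 0 <;> aesop (add simp compositionBlocks)
  | succ k ih =>
    rcases l.eq_nil_or_concat' with rfl | ⟨l, m, rfl⟩
    · simp [compositionBlocks]
    · simp [compositionBlocks, ih, List.append_singleton_inj]
      grind

theorem ne_nil_of_mem_compositionBlocks {k n : ℕ} {l : List ℕ}
    (hl : l ∈ compositionBlocks (k + 1) n) : l ≠ [] := by
  rintro rfl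
  simp [mem_compositionBlocks] at hl

theorem compositionBlocks_succ_zero (k : ℕ) : compositionBlocks (k + 1) 0 = ∅ := by
  simp [compositionBlocks]

theorem compositionBlocks_one {n : ℕ} (hn : 1 ≤ n) : compositionBlocks 1 n = {[n]} := by
  ext l
  rw [mem_compositionBlocks, Finset.mem_singleton, List.length_eq_one_iff]
  constructor
  · rintro ⟨⟨a, rfl⟩, hsum, -⟩
    simpa using hsum
  · rintro rfl
    simpa using Nat.lt_of_succ_le hn

theorem sum_compositionBlocks_succ {M : Type*} [AddCommMonoid M] (g : List ℕ → M) (k n : ℕ) :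
    ∑ l ∈ compositionBlocks (k + 1) n, g l
      = ∑ m ∈ Finset.Icc 1 n, ∑ l ∈ compositionBlocks k (n - m), g (l ++ [m]) := by
  rw [compositionBlocks, Finset.sum_biUnion]
  · refine Finset.sum_congr rfl fun m _ => Finset.sum_image ?_
    simp
  · intro m₁ _ m₂ _ hne
    simp only [Function.onFun, Finset.disjoint_left, Finset.mem_image]
    rintro _ ⟨l₁, -, rfl⟩ ⟨l₂, -, h⟩
    exact hne (List.append_singleton_inj.1 h).2.symm

theorem sum_filter_length_eq_sum_compositionBlocks {M : Type*} [AddCommMonoid M]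
    (g : List ℕ → M) (k n : ℕ) :
    ∑ c ∈ Finset.univ.filter (fun c : Composition n => c.length = k), g c.blocks
      = ∑ l ∈ compositionBlocks k n, g l := by
  refine Finset.sum_nbij Composition.blocks ?_ (fun c _ c' _ h => Composition.ext h) ?_
    fun _ _ => rfl
  · intro c hc
    exact mem_compositionBlocks.2
      ⟨(Finset.mem_filter.1 hc).2, c.blocks_sum, fun i hi => c.blocks_pos hi⟩
  · intro l hl
    obtain ⟨hlen, hsum, hpos⟩ := mem_compositionBlocks.1 hl
    exact ⟨⟨l, hpos _, hsum⟩, by simpa [Composition.length] using hlen, rfl⟩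

theorem compCoeff_append_singleton (K : Type*) [Field K] (l : List ℕ) (m : ℕ) :
    compCoeff K (l ++ [m]) = compCoeff K l * ((l.sum + m : ℕ) : K)⁻¹ := by
  rw [compCoeff, compCoeff, List.length_append, List.length_singleton, Finset.prod_range_succ,
    List.take_of_length_le (by simp), List.sum_append, List.sum_singleton]
  congr 1
  refine Finset.prod_congr rfl fun j hj => ?_
  rw [List.take_append_of_le_length (Finset.mem_range.1 hj)]

theorem compCoeff_singleton (K : Type*) [Field K] (m : ℕ) : compCoeff K [m] = (m : K)⁻¹ := by
  simp [compCoeff]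

theorem sum_compositionBlocks_one_smul {K M : Type*} [Field K] [AddCommMonoid M] [Module K M]
    {n : ℕ} (hn : 1 ≤ n) (v : List ℕ → M) :
    ∑ l ∈ compositionBlocks 1 n, compCoeff K l • v l = (n : K)⁻¹ • v [n] := by
  rw [compositionBlocks_one hn, Finset.sum_singleton, compCoeff_singleton]

section LieRing

variable {K L : Type*} [Field K] [LieRing L] [LieAlgebra K L]

def iteratedAd (f : ℕ → L) (x : L) (l : List ℕ) : L :=
  l.foldl (fun a i => ⁅f i, a⁆) x

theorem iteratedAd_append_singleton (f : ℕ → L) (x : L) (l : List ℕ) (m : ℕ) :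
    iteratedAd f x (l ++ [m]) = ⁅f m, iteratedAd f x l⁆ :=
  List.foldl_concat ..

theorem iteratedAd_tail_append_singleton (f lam : ℕ → L) {l : List ℕ} (hl : l ≠ []) (m : ℕ) :
    iteratedAd f (lam (l ++ [m]).headI) (l ++ [m]).tail
      = ⁅f m, iteratedAd f (lam l.headI) l.tail⁆ := by
  obtain ⟨a, t, rfl⟩ := List.exists_cons_of_ne_nil hl
  exact iteratedAd_append_singleton f (lam a) t m

theorem sum_compositionBlocks_succ_succ_smul (f : ℕ → L) {v : List ℕ → L}
    (hv : ∀ l ≠ [], ∀ m, v (l ++ [m]) = ⁅f m, v l⁆) (k n : ℕ) :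
    ∑ l ∈ compositionBlocks (k + 2) n, compCoeff K l • v l
      = ∑ m ∈ Finset.Ioo 0 n,
          (n : K)⁻¹ • ⁅f m, ∑ l ∈ compositionBlocks (k + 1) (n - m), compCoeff K l • v l⁆ := by
  rw [sum_compositionBlocks_succ, ← Finset.sum_subset (s₁ := Finset.Ioo 0 n)]
  · refine Finset.sum_congr rfl fun m hm => ?_
    rw [lie_sum, Finset.smul_sum]
    refine Finset.sum_congr rfl fun l hl => ?_
    have hsum : l.sum + m = n := by
      have := (mem_compositionBlocks.1 hl).2.1
      have := Finset.mem_Ioo.1 hm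
      omega
    rw [hv l (ne_nil_of_mem_compositionBlocks hl), compCoeff_append_singleton, hsum, lie_smul,
      smul_smul, mul_comm]
  · intro m hm
    simp only [Finset.mem_Ioo, Finset.mem_Icc] at hm ⊢
    omega
  · intro m hm hm'
    obtain rfl : m = n := by simp only [Finset.mem_Ioo, Finset.mem_Icc] at hm hm'; omega
    rw [Nat.sub_self, compositionBlocks_succ_zero, Finset.sum_empty]

theorem telescoping_compositionBlocks (f lam : ℕ → L) (d : L)
    (hyp : ∀ n : ℕ, 1 ≤ n →
      ⁅f n, d⁆ = lam n - ∑ i ∈ Finset.Ioo 0 n, ((n - i : ℕ) : K)⁻¹ • ⁅f i, lam (n - i)⁆)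
    (k n : ℕ) :
    ∑ l ∈ compositionBlocks (k + 1) n, compCoeff K l • iteratedAd f d l
      = ∑ l ∈ compositionBlocks (k + 1) n, compCoeff K l • iteratedAd f (lam l.headI) l.tail
        - ∑ l ∈ compositionBlocks (k + 2) n,
            compCoeff K l • iteratedAd f (lam l.headI) l.tail := by
  have hd := fun l (_ : l ≠ []) => iteratedAd_append_singleton f d l
  have hlam := fun l (hl : l ≠ []) => iteratedAd_tail_append_singleton f lam hl
  induction k generalizing n with
  | zero =>
    rcases Nat.eq_zero_or_pos n with rfl | hn
    · simp [compositionBlocks_succ_zero]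
    have hsub : ∀ m ∈ Finset.Ioo 0 n, 1 ≤ n - m := fun m hm => by
      simp only [Finset.mem_Ioo] at hm; omega
    rw [sum_compositionBlocks_succ_succ_smul f hlam, Nat.zero_add,
      sum_compositionBlocks_one_smul hn, sum_compositionBlocks_one_smul hn,
      Finset.sum_congr rfl fun m hm => by rw [sum_compositionBlocks_one_smul (hsub m hm)]]
    simp only [iteratedAd, List.foldl_cons, List.foldl_nil, List.headI, List.tail_cons]
    rw [hyp n hn, smul_sub, Finset.smul_sum]
    simp only [lie_smul, smul_smul]
  | succ k ih =>
    rw [sum_compositionBlocks_succ_succ_smul f hd k, sum_compositionBlocks_succ_succ_smul f hlam k,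
      sum_compositionBlocks_succ_succ_smul f hlam (k + 1), ← Finset.sum_sub_distrib]
    simp_rw [ih, lie_sub, smul_sub]

end LieRing

theorem telescoping_identity_general
    (K : Type*) (L : Type*) [Field K] [LieRing L] [LieAlgebra K L]
    (f lam : ℕ → L) (d : L)
    (hyp : ∀ n : ℕ, 1 ≤ n →
      ⁅f n, d⁆ = lam n - ∑ i ∈ Finset.Ioo 0 n,
        (((n - i : ℕ) : K))⁻¹ • ⁅f i, lam (n - i)⁆) :
    ∀ k n : ℕ, 1 ≤ k → 1 ≤ n →
      ∑ c ∈ Finset.univ.filter (fun c : Composition n => c.length = k),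
          compCoeff K c.blocks • c.blocks.foldl (fun a i => ⁅f i, a⁆) d
        = (∑ c ∈ Finset.univ.filter (fun c : Composition n => c.length = k),
            compCoeff K c.blocks •
              c.blocks.tail.foldl (fun a i => ⁅f i, a⁆) (lam c.blocks.headI))
          - ∑ c ∈ Finset.univ.filter (fun c : Composition n => c.length = k + 1),
              compCoeff K c.blocks •
                c.blocks.tail.foldl (fun a i => ⁅f i, a⁆) (lam c.blocks.headI) := by
  intro k n hk _
  obtain ⟨k, rfl⟩ := Nat.exists_eq_add_of_le' hk
  have h := telescoping_compositionBlocks f lam d hyp k n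
  simp only [← sum_filter_length_eq_sum_compositionBlocks] at h
  exact h

/-- the telescoping identity.  If `[f_n, d] = λ_n - ∑_{i+j=n} (1/j)[f_i, λ_j]`
for all `n ≥ 1`, then for all `k, n ≥ 1`,
`∑_{i₁+⋯+i_k=n} (∏_j 1/(i₁+⋯+i_j)) ad_{f_{i_k}}⋯ad_{f_{i_1}}(d)
  = ∑_{i₁+⋯+i_k=n} (∏_j 1/(i₁+⋯+i_j)) ad_{f_{i_k}}⋯ad_{f_{i_2}}(λ_{i_1})
    - ∑_{j₀+⋯+j_k=n} (∏_j 1/(j₀+⋯+j_j)) ad_{f_{j_k}}⋯ad_{f_{j_1}}(λ_{j₀})`. -/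
theorem telescoping_identity
    (K : Type*) (L : Type*) [Field K] [CharZero K] [LieRing L] [LieAlgebra K L]
    (f lam : ℕ → L) (d : L)
    (hyp : ∀ n : ℕ, 1 ≤ n →
      ⁅f n, d⁆ = lam n - ∑ i ∈ Finset.Ioo 0 n,
        (((n - i : ℕ) : K))⁻¹ • ⁅f i, lam (n - i)⁆) :
    ∀ k n : ℕ, 1 ≤ k → 1 ≤ n →
      ∑ c ∈ Finset.univ.filter (fun c : Composition n => c.length = k),
          compCoeff K c.blocks • c.blocks.foldl (fun a i => ⁅f i, a⁆) d
        = (∑ c ∈ Finset.univ.filter (fun c : Composition n => c.length = k),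
            compCoeff K c.blocks •
              c.blocks.tail.foldl (fun a i => ⁅f i, a⁆) (lam c.blocks.headI))
          - ∑ c ∈ Finset.univ.filter (fun c : Composition n => c.length = k + 1),
              compCoeff K c.blocks •
                c.blocks.tail.foldl (fun a i => ⁅f i, a⁆) (lam c.blocks.headI) :=
  telescoping_identity_general K L f lam d hyp
end
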